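/- With the context's notation (in particular {f₁,…,f_s} is a basis of A), the kernel of the K-algebra homomorphism ψ : K[X₁,…,X_s] → K[x], Xᵢ ↦ fᵢ, is the ideal of K[X₁,…,X_s] generated by G₁,…,G_r, where Gᵢ = Fᵢ − Pᵢ. -/

import Mathlib

set_option synthInstance.maxHeartbeats 1000000
set_option maxHeartbeats 1000000

/-- The set of degrees of nonzero elements of a subalgebra `A ⊆ K[x]`. -/
def dSet (K : Type*) [Field K] (A : Subalgebra K (Polynomial K)) : Set ℕ :=
  {n | ∃ f ∈ A, f ≠ 0 ∧ f.natDegree = n}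

/-- The quotient `K[x]/A` has finite length as an `A`-module. -/
def FiniteLengthQuotPoly (K : Type*) [Field K] (A : Subalgebra K (Polynomial K)) : Prop :=
  IsFiniteLength A (Polynomial K ⧸ LinearMap.range (Algebra.linearMap A (Polynomial K)))

/-!
Grade `K[X₁,…,X_s]` by giving `Xⱼ` the weight `d(fⱼ)`. Since the `fⱼ` are monic, `ψ` sends a
term `c X^θ` of weight `m` to `c` times a monic polynomial of degree `m`, so if `Q ∈ ker ψ` has all
its monomials of weight `≤ n`, then `φ` kills the weight-`n` form `Qₙ` of `Q`: `φ(Qₙ)` is the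
coefficient of `xⁿ` in `ψ(Q) = 0`, times `xⁿ`. Hence `Qₙ ∈ ker φ = (F₁,…,F_r)`, and as the `Fᵢ` are
homogeneous, `Qₙ = Σ Hᵢ Fᵢ` with `Hᵢ` homogeneous of weight `n - pᵢ`. Then
`Q - Σ Hᵢ Gᵢ = (Q - Qₙ) + Σ Hᵢ Pᵢ` lies in `ker ψ` and has weight `< n`, and induction on `n`
gives `ker ψ ⊆ (G₁,…,G_r)`.
-/

open scoped Polynomial

namespace MvPolynomial

section WeightedDegreeLT

variable {σ R : Type*} [CommRing R] (w : σ → ℕ)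

variable (R) in
noncomputable def weightedDegreeLT (n : ℕ) : Submodule R (MvPolynomial σ R) :=
  restrictSupport R {d | Finsupp.weight w d < n}

variable {w}

theorem mem_weightedDegreeLT {p : MvPolynomial σ R} {n : ℕ} :
    p ∈ weightedDegreeLT R w n ↔ ∀ d ∈ p.support, Finsupp.weight w d < n :=
  Iff.rfl

theorem weightedDegreeLT_zero : weightedDegreeLT R w 0 = ⊥ := by
  refine eq_bot_iff.2 fun p hp => ?_
  rw [Submodule.mem_bot, ← support_eq_empty, Finset.eq_empty_iff_forall_notMem]
  exact fun d hd => Nat.not_lt_zero _ (mem_weightedDegreeLT.1 hp d hd)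

theorem mem_weightedDegreeLT_weightedTotalDegree_succ (p : MvPolynomial σ R) :
    p ∈ weightedDegreeLT R w (weightedTotalDegree w p + 1) :=
  mem_weightedDegreeLT.2 fun _ hd => Nat.lt_succ_of_le (le_weightedTotalDegree w hd)

theorem sub_weightedHomogeneousComponent_mem_weightedDegreeLT {p : MvPolynomial σ R} {n : ℕ}
    (hp : p ∈ weightedDegreeLT R w (n + 1)) :
    p - weightedHomogeneousComponent w n p ∈ weightedDegreeLT R w n := by
  classical
  refine mem_weightedDegreeLT.2 fun d hd => ?_
  rw [mem_support_iff, coeff_sub, coeff_weightedHomogeneousComponent] at hd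
  split_ifs at hd with h
  · exact absurd (sub_self _) hd
  · rw [sub_zero, ← mem_support_iff] at hd
    exact lt_of_le_of_ne (Nat.lt_succ_iff.1 (mem_weightedDegreeLT.1 hp d hd)) h

theorem mul_mem_weightedDegreeLT {H P : MvPolynomial σ R} {p n : ℕ}
    (hH : ∀ d ∈ H.support, Finsupp.weight w d + p = n) (hP : P ∈ weightedDegreeLT R w p) :
    H * P ∈ weightedDegreeLT R w n := by
  classical
  refine mem_weightedDegreeLT.2 fun d hd => ?_
  obtain ⟨a, ha, b, hb, rfl⟩ := Finset.mem_add.1 (support_mul H P hd)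
  have := mem_weightedDegreeLT.1 hP b hb
  rw [map_add, ← hH a ha]
  omega

attribute [local instance] weightedGradedAlgebra in
theorem weightedHomogeneousComponent_mul_of_isWeightedHomogeneous_right {F : MvPolynomial σ R}
    {p : ℕ} (hF : F.IsWeightedHomogeneous w p) (c : MvPolynomial σ R) (n : ℕ) :
    weightedHomogeneousComponent w n (c * F)
      = if p ≤ n then weightedHomogeneousComponent w (n - p) c * F else 0 := by
  simp_rw [← weightedDecomposition.decompose'_apply]
  exact DirectSum.coe_decompose_mul_of_right_mem _ n hF

-- The degree condition on `H i` is stated without the truncated `n - p i`: it forces `H i = 0`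
-- when `n < p i`.
theorem IsWeightedHomogeneous.exists_eq_sum_mul_of_mem_span {ι : Type*} [Fintype ι]
    {F : ι → MvPolynomial σ R} {p : ι → ℕ} (hF : ∀ i, (F i).IsWeightedHomogeneous w (p i))
    {Q : MvPolynomial σ R} {n : ℕ} (hQ : Q.IsWeightedHomogeneous w n)
    (hQF : Q ∈ Ideal.span (Set.range F)) :
    ∃ H : ι → MvPolynomial σ R, Q = ∑ i, H i * F i ∧
      ∀ i, ∀ d ∈ (H i).support, Finsupp.weight w d + p i = n := by
  classical
  obtain ⟨c, rfl⟩ := Ideal.mem_span_range_iff_exists_fun.1 hQF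
  refine ⟨fun i => if p i ≤ n then weightedHomogeneousComponent w (n - p i) (c i) else 0,
    ?_, fun i d hd => ?_⟩
  · rw [← hQ.weightedHomogeneousComponent_same, map_sum]
    refine Finset.sum_congr rfl fun i _ => ?_
    rw [weightedHomogeneousComponent_mul_of_isWeightedHomogeneous_right (hF i), ite_mul, zero_mul]
  · dsimp only at hd
    split_ifs at hd with hpn
    · rw [weightedHomogeneousComponent_isWeightedHomogeneous _ _ (mem_support_iff.1 hd)]
      omega
    · simp at hd

theorem ker_eq_span_sub_of_weightedHomogeneousComponent_mem_span {S : Type*} [CommRing S]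
    {ι : Type*} [Fintype ι] (ψ : MvPolynomial σ R →+* S) {F P : ι → MvPolynomial σ R}
    {p : ι → ℕ} (hF : ∀ i, (F i).IsWeightedHomogeneous w (p i))
    (hP : ∀ i, P i ∈ weightedDegreeLT R w (p i)) (hψ : ∀ i, ψ (F i - P i) = 0)
    (htop : ∀ n, ∀ Q ∈ RingHom.ker ψ, Q ∈ weightedDegreeLT R w (n + 1) →
      weightedHomogeneousComponent w n Q ∈ Ideal.span (Set.range F)) :
    RingHom.ker ψ = Ideal.span (Set.range fun i => F i - P i) := by
  set G := fun i => F i - P i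
  have hG : ∀ H : ι → MvPolynomial σ R, ∑ i, H i * G i ∈ Ideal.span (Set.range G) :=
    fun H => Ideal.sum_mem _ fun i _ => Ideal.mul_mem_left _ _ (Ideal.subset_span ⟨i, rfl⟩)
  have lift : ∀ n, ∀ Q ∈ RingHom.ker ψ, Q ∈ weightedDegreeLT R w n →
      Q ∈ Ideal.span (Set.range G) := by
    intro n
    induction n with
    | zero =>
      intro Q _ hQ
      rw [weightedDegreeLT_zero, Submodule.mem_bot] at hQ
      exact hQ ▸ zero_mem _
    | succ n ih =>
      intro Q hQ hQn
      obtain ⟨H, hTH, hH⟩ := (weightedHomogeneousComponent_isWeightedHomogeneous n Q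
        ).exists_eq_sum_mul_of_mem_span hF (htop n Q hQ hQn)
      have hlower : Q - ∑ i, H i * G i ∈ weightedDegreeLT R w n := by
        have : Q - ∑ i, H i * G i
            = (Q - weightedHomogeneousComponent w n Q) + ∑ i, H i * P i := by
          simp only [G, hTH, mul_sub, Finset.sum_sub_distrib]; ring
        rw [this]
        exact add_mem (sub_weightedHomogeneousComponent_mem_weightedDegreeLT hQn)
          (sum_mem fun i _ => mul_mem_weightedDegreeLT (hH i) (hP i))
      have hker : Q - ∑ i, H i * G i ∈ RingHom.ker ψ :=
        sub_mem hQ (Ideal.sum_mem _ fun i _ => Ideal.mul_mem_left _ _ (hψ i))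
      simpa only [sub_add_cancel] using add_mem (ih _ hker hlower) (hG H)
  refine le_antisymm (fun Q hQ => lift _ Q hQ (mem_weightedDegreeLT_weightedTotalDegree_succ Q)) ?_
  exact Ideal.span_le.2 (Set.range_subset_iff.2 hψ)

end WeightedDegreeLT

section MonicSubstitution

variable {σ R : Type*} [CommRing R]

theorem aeval_X_pow_monomial (w : σ → ℕ) (θ : σ →₀ ℕ) (c : R) :
    aeval (fun i => (Polynomial.X : R[X]) ^ w i) (monomial θ c)
      = Polynomial.C c * Polynomial.X ^ Finsupp.weight w θ := by
  simp only [aeval_monomial, Polynomial.algebraMap_eq, ← pow_mul, Finsupp.prod,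
    Finset.prod_pow_eq_pow_sum, Finsupp.weight_apply, Finsupp.sum, smul_eq_mul, mul_comm]

theorem natDegree_prod_pow_of_monic {f : σ → R[X]} (hf : ∀ i, (f i).Monic) (θ : σ →₀ ℕ) :
    (θ.prod fun i e => f i ^ e).natDegree = Finsupp.weight (fun i => (f i).natDegree) θ := by
  rw [Finsupp.prod, Polynomial.natDegree_prod_of_monic _ _ fun i _ => (hf i).pow _,
    Finsupp.weight_apply, Finsupp.sum]
  simp only [(hf _).natDegree_pow, smul_eq_mul]

theorem aeval_X_pow_natDegree_weightedHomogeneousComponent_monomial {f : σ → R[X]}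
    (hf : ∀ i, (f i).Monic) {θ : σ →₀ ℕ} {n : ℕ}
    (hθ : Finsupp.weight (fun i => (f i).natDegree) θ ≤ n) (c : R) :
    aeval (fun i => (Polynomial.X : R[X]) ^ (f i).natDegree)
        (weightedHomogeneousComponent (fun i => (f i).natDegree) n (monomial θ c))
      = Polynomial.C ((aeval f (monomial θ c)).coeff n) * Polynomial.X ^ n := by
  classical
  have hmonic : (θ.prod fun i e => f i ^ e).Monic :=
    Polynomial.monic_prod_of_monic _ _ fun i _ => (hf i).pow _
  have hdeg := natDegree_prod_pow_of_monic hf θ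
  rw [weightedHomogeneousComponent_of_mem (isWeightedHomogeneous_monomial _ θ c rfl),
    aeval_monomial, Polynomial.algebraMap_eq, Polynomial.coeff_C_mul]
  rcases hθ.eq_or_lt with h | h
  · rw [if_pos h.symm, aeval_X_pow_monomial, ← h, ← hdeg, hmonic.coeff_natDegree, mul_one]
  · rw [if_neg h.ne', map_zero, Polynomial.coeff_eq_zero_of_natDegree_lt (hdeg ▸ h), mul_zero,
      map_zero, zero_mul]

theorem aeval_X_pow_natDegree_weightedHomogeneousComponent {f : σ → R[X]}
    (hf : ∀ i, (f i).Monic) {Q : MvPolynomial σ R} {n : ℕ}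
    (hQ : Q ∈ weightedDegreeLT R (fun i => (f i).natDegree) (n + 1)) :
    aeval (fun i => (Polynomial.X : R[X]) ^ (f i).natDegree)
        (weightedHomogeneousComponent (fun i => (f i).natDegree) n Q)
      = Polynomial.C ((aeval f Q).coeff n) * Polynomial.X ^ n := by
  rw [Q.as_sum, map_sum, map_sum, map_sum, Polynomial.finsetSum_coeff, map_sum, Finset.sum_mul]
  exact Finset.sum_congr rfl fun θ hθ =>
    aeval_X_pow_natDegree_weightedHomogeneousComponent_monomial hf
      (Nat.lt_succ_iff.1 (mem_weightedDegreeLT.1 hQ θ hθ)) _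

theorem isWeightedHomogeneous_monomial_sub_monomial_of_aeval_X_pow_eq_zero [Nontrivial R]
    {w : σ → ℕ} {a b : σ →₀ ℕ}
    (h : aeval (fun i => (Polynomial.X : R[X]) ^ w i) (monomial a (1 : R) - monomial b 1) = 0) :
    (monomial a (1 : R) - monomial b 1).IsWeightedHomogeneous w (Finsupp.weight w a) := by
  rw [map_sub, aeval_X_pow_monomial, aeval_X_pow_monomial, sub_eq_zero] at h
  have hab : Finsupp.weight w b = Finsupp.weight w a := by
    simpa using congrArg Polynomial.natDegree h.symm
  exact (isWeightedHomogeneous_monomial _ _ _ rfl).sub (isWeightedHomogeneous_monomial _ _ _ hab)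

end MonicSubstitution

end MvPolynomial

open MvPolynomial

theorem stmt_14_general (K : Type*) [Field K] {s r : ℕ} (f : Fin s → Polynomial K)
    (hmonic : ∀ i, (f i).Monic)
    (α β : Fin r → (Fin s →₀ ℕ))
    (hker : RingHom.ker (MvPolynomial.aeval fun i =>
        (Polynomial.X : Polynomial K) ^ (f i).natDegree)
      = Ideal.span (Set.range fun i =>
          (MvPolynomial.monomial (α i) (1 : K) - MvPolynomial.monomial (β i) (1 : K))))
    (P : Fin r → MvPolynomial (Fin s) K)
    (hP : ∀ i, MvPolynomial.aeval f (P i)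
      = (∏ j, f j ^ (α i) j) - (∏ j, f j ^ (β i) j))
    (hPweight : ∀ i, ∀ θ ∈ (P i).support,
      (∑ j, θ j * (f j).natDegree) < ∑ j, (α i) j * (f j).natDegree) :
    RingHom.ker (MvPolynomial.aeval f)
      = Ideal.span (Set.range fun i =>
          MvPolynomial.monomial (α i) (1 : K) - MvPolynomial.monomial (β i) (1 : K)
            - P i) := by
  have hweight : ∀ θ : Fin s →₀ ℕ,
      Finsupp.weight (fun j => (f j).natDegree) θ = ∑ j, θ j * (f j).natDegree := fun θ => by
    simp [Finsupp.weight_eq_sum]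
  refine ker_eq_span_sub_of_weightedHomogeneousComponent_mem_span (aeval f).toRingHom
    (fun i => isWeightedHomogeneous_monomial_sub_monomial_of_aeval_X_pow_eq_zero
      (RingHom.mem_ker.1 (hker ▸ Ideal.subset_span (Set.mem_range_self i))))
    (fun i => mem_weightedDegreeLT.2 fun θ hθ => by simpa [hweight] using hPweight i θ hθ)
    (fun i => ?_) (fun n Q hQ hQn => ?_)
  · simp [aeval_monomial, Finsupp.prod_fintype, hP]
  · rw [← hker, RingHom.mem_ker, aeval_X_pow_natDegree_weightedHomogeneousComponent hmonic hQn,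
      (RingHom.mem_ker.1 hQ : aeval f Q = 0), Polynomial.coeff_zero, map_zero, zero_mul]

/-- If `{f₁,…,f_s}` is a basis of `A = K[f₁,…,f_s]`, the kernel of
`ψ : K[X₁,…,X_s] → K[x]`, `Xᵢ ↦ fᵢ`, is generated by the elements `Gᵢ = Fᵢ − Pᵢ`, where
`F₁,…,F_r` are binomials generating the kernel of `φ : K[X₁,…,X_s] → K[x]`,
`Xᵢ ↦ x^{d(fᵢ)}`, `Sᵢ = ψ(Fᵢ)`, and `Pᵢ` is an expression of `Sᵢ` in `f₁,…,f_s` all of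
whose monomials have weight `< pᵢ`. -/
theorem stmt_14 (K : Type*) [Field K] {s r : ℕ} (f : Fin s → Polynomial K)
    (hmonic : ∀ i, (f i).Monic) (hdeg : ∀ i, 0 < (f i).natDegree)
    (hlen : FiniteLengthQuotPoly K (Algebra.adjoin K (Set.range f)))
    (hbasis : dSet K (Algebra.adjoin K (Set.range f))
        = ↑(AddSubmonoid.closure (Set.range fun j => (f j).natDegree)))
    (α β : Fin r → (Fin s →₀ ℕ))
    (hker : RingHom.ker (MvPolynomial.aeval fun i =>
        (Polynomial.X : Polynomial K) ^ (f i).natDegree)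
      = Ideal.span (Set.range fun i =>
          (MvPolynomial.monomial (α i) (1 : K) - MvPolynomial.monomial (β i) (1 : K))))
    (P : Fin r → MvPolynomial (Fin s) K)
    (hP : ∀ i, MvPolynomial.aeval f (P i)
      = (∏ j, f j ^ (α i) j) - (∏ j, f j ^ (β i) j))
    (hPweight : ∀ i, ∀ θ ∈ (P i).support,
      (∑ j, θ j * (f j).natDegree) < ∑ j, (α i) j * (f j).natDegree) :
    RingHom.ker (MvPolynomial.aeval f)
      = Ideal.span (Set.range fun i =>
          MvPolynomial.monomial (α i) (1 : K) - MvPolynomial.monomial (β i) (1 : K)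
            - P i) :=
  stmt_14_general K f hmonic α β hker P hP hPweight
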